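/- arXiv:2201.01924 — 2 statements merged into one kernel-verified Lean document; each statement's English description precedes it below -/
import Mathlib

section
/- Let C(t) = 1_{Y(t) ≤ G} Y(t) where Y(t) is geometric on {1,2,...} with success probability e^{-ρt} and G is independent geometric with success probability δ/ρ. Then E[C(t)] = e^{ρt} / (1 + δ(e^{ρt}-1)/ρ)^2. -/
/-!
Conditioning on the value `k` of `Y` and using independence,
`E[C(t)] = ∑ₖ k P(Y = k) P(G ≥ k)`. For `G` geometric with parameter `p`, `P(G ≥ k + 1) = (1 - p)ᵏ`,
so with `Y` geometric with parameter `q` the series is `q ∑ₖ (k + 1) xᵏ = q / (1 - x)²` where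
`x = (1 - q)(1 - p)`. For `q = e^{-ρt}` and `p = δ/ρ` one has `1 - x = q (1 + δ(e^{ρt} - 1)/ρ)`.
-/

open MeasureTheory Real
open scoped ENNReal

section
variable {Ω : Type*} [MeasurableSpace Ω] {μ : Measure Ω}

theorem measure_preimage_Ici_eq_tsum {G : Ω → ℕ} (hG : Measurable G) (k : ℕ) :
    μ (G ⁻¹' Set.Ici k) = ∑' j, μ (G ⁻¹' {k + j}) := by
  have hIci : G ⁻¹' Set.Ici k = ⋃ j, G ⁻¹' {k + j} := by
    ext ω
    simp [le_iff_exists_add]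
  rw [hIci, measure_iUnion _ fun j => hG (measurableSet_singleton _)]
  intro i j hij
  exact Disjoint.preimage _ (by simpa using hij)

theorem measure_preimage_Ici_succ_of_geometric {G : Ω → ℕ} (hG : Measurable G) {p : ℝ}
    (hp0 : 0 < p) (hp1 : p ≤ 1)
    (hGk : ∀ k, μ (G ⁻¹' {k + 1}) = ENNReal.ofReal (p * (1 - p) ^ k)) (k : ℕ) :
    μ (G ⁻¹' Set.Ici (k + 1)) = ENNReal.ofReal ((1 - p) ^ k) := by
  have hsum : HasSum (fun j => p * (1 - p) ^ (k + j)) ((1 - p) ^ k) := by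
    have h := (hasSum_geometric_of_lt_one (sub_nonneg.2 hp1) (by linarith)).mul_left
      (p * (1 - p) ^ k)
    rw [sub_sub_cancel, mul_right_comm, mul_inv_cancel₀ hp0.ne', one_mul] at h
    simpa only [pow_add, mul_assoc] using h
  rw [measure_preimage_Ici_eq_tsum hG, ← hsum.tsum_eq,
    ENNReal.ofReal_tsum_of_nonneg (fun j => mul_nonneg hp0.le (pow_nonneg (by linarith) _))
      hsum.summable]
  congr 1 with j
  rw [add_right_comm, hGk]

theorem lintegral_ite_le_eq_tsum {Y G : Ω → ℕ} (hY : Measurable Y) (hG : Measurable G) :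
    ∫⁻ ω, (if Y ω ≤ G ω then (Y ω : ℝ≥0∞) else 0) ∂μ
      = ∑' k : ℕ, (k : ℝ≥0∞) * μ (Y ⁻¹' {k} ∩ G ⁻¹' Set.Ici k) := by
  have hmeas (k : ℕ) : MeasurableSet (Y ⁻¹' {k} ∩ G ⁻¹' Set.Ici k) :=
    (hY (measurableSet_singleton k)).inter (hG measurableSet_Ici)
  have hfiber (ω : Ω) : (if Y ω ≤ G ω then (Y ω : ℝ≥0∞) else 0)
      = ∑' k : ℕ, (Y ⁻¹' {k} ∩ G ⁻¹' Set.Ici k).indicator (fun _ => (k : ℝ≥0∞)) ω := by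
    rw [tsum_eq_single (Y ω) fun k hk => Set.indicator_of_notMem (by simp [Ne.symm hk]) _]
    split_ifs with h <;> simp [Set.indicator, h]
  simp_rw [hfiber]
  rw [lintegral_tsum fun k => (measurable_const.indicator (hmeas k)).aemeasurable]
  simp_rw [lintegral_indicator_const (hmeas _)]

theorem lintegral_ite_le_of_indepFun_geometric {Y G : Ω → ℕ} (hYm : Measurable Y)
    (hGm : Measurable G) {q p : ℝ} (hq0 : 0 ≤ q) (hq1 : q ≤ 1) (hp0 : 0 < p) (hp1 : p ≤ 1)
    (hY : ∀ k, μ (Y ⁻¹' {k + 1}) = ENNReal.ofReal (q * (1 - q) ^ k))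
    (hG : ∀ k, μ (G ⁻¹' {k + 1}) = ENNReal.ofReal (p * (1 - p) ^ k))
    (hindep : ProbabilityTheory.IndepFun Y G μ) :
    ∫⁻ ω, (if Y ω ≤ G ω then (Y ω : ℝ≥0∞) else 0) ∂μ
      = ENNReal.ofReal (q / (1 - (1 - q) * (1 - p)) ^ 2) := by
  have hq' : 0 ≤ 1 - q := by linarith
  have hp' : 0 ≤ 1 - p := by linarith
  have hsum : HasSum (fun k : ℕ => ((k + 1 : ℕ) : ℝ) * (q * (1 - q) ^ k * (1 - p) ^ k))
      (q / (1 - (1 - q) * (1 - p)) ^ 2) := by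
    have hx1 : (1 - q) * (1 - p) < 1 := by nlinarith
    have := (hasSum_choose_mul_geometric_of_norm_lt_one 1
      (by rwa [norm_of_nonneg (mul_nonneg hq' hp')])).mul_left q
    simpa only [Nat.choose_one_right, mul_pow, mul_div_assoc', mul_one, mul_left_comm _ q,
      mul_assoc] using this
  rw [lintegral_ite_le_eq_tsum hYm hGm, tsum_eq_zero_add' ENNReal.summable, Nat.cast_zero,
    zero_mul, zero_add, ← hsum.tsum_eq,
    ENNReal.ofReal_tsum_of_nonneg (fun k => by positivity) hsum.summable]
  congr 1 with k
  rw [hindep.measure_inter_preimage_eq_mul _ _ (measurableSet_singleton _) measurableSet_Ici,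
    hY, measure_preimage_Ici_succ_of_geometric hGm hp0 hp1 hG, ← ENNReal.ofReal_natCast,
    ← ENNReal.ofReal_mul (by positivity), ← ENNReal.ofReal_mul (by positivity), mul_assoc]

end

theorem expected_cluster_size_general
    {Ω : Type*} [MeasurableSpace Ω] (ℙ : Measure Ω)
    (ρ δ t : ℝ) (hδ : 0 < δ) (hδρ : δ ≤ ρ) (ht : 0 ≤ t)
    (Y G : Ω → ℕ) (hYmeas : Measurable Y) (hGmeas : Measurable G)
    (hY : ∀ k : ℕ, 1 ≤ k →
      ℙ {ω | Y ω = k} = ENNReal.ofReal ((1 - exp (-ρ * t)) ^ (k - 1) * exp (-ρ * t)))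
    (hG : ∀ k : ℕ, 1 ≤ k →
      ℙ {ω | G ω = k} = ENNReal.ofReal ((δ / ρ) * (1 - δ / ρ) ^ (k - 1)))
    (hindep : ProbabilityTheory.IndepFun Y G ℙ) :
    ∫⁻ ω, (if Y ω ≤ G ω then (Y ω : ℝ≥0∞) else 0) ∂ℙ
      = ENNReal.ofReal (exp (ρ * t) / (1 + δ * (exp (ρ * t) - 1) / ρ) ^ 2) := by
  have hρ : 0 < ρ := hδ.trans_le hδρ
  have hq1 : exp (-ρ * t) ≤ 1 := exp_le_one_iff.2 (by nlinarith)
  rw [lintegral_ite_le_of_indepFun_geometric hYmeas hGmeas (exp_pos _).le hq1 (div_pos hδ hρ)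
    ((div_le_one hρ).2 hδρ) (fun k => by simpa [Set.preimage, mul_comm] using hY (k + 1) k.succ_pos)
    (fun k => by simpa [Set.preimage] using hG (k + 1) k.succ_pos) hindep]
  have hqE : exp (-ρ * t) * exp (ρ * t) = 1 := by rw [← exp_add]; simp
  generalize exp (-ρ * t) = q at hqE ⊢
  generalize exp (ρ * t) = E at hqE ⊢
  have hdenom : 1 - (1 - q) * (1 - δ / ρ) = q * (1 + δ * (E - 1) / ρ) := by
    field_simp
    linear_combination (-δ) * hqE
  rw [hdenom, mul_pow]
  congr 1
  have hq : q ≠ 0 := left_ne_zero_of_mul_eq_one hqE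
  field_simp
  rw [hqE]

/-- Expectation of the typical cluster size `C(t) = 1_{Y(t) ≤ G} Y(t)`:
`E[C(t)] = e^{ρt} / (1 + δ(e^{ρt}-1)/ρ)^2`. -/
theorem expected_cluster_size
    {Ω : Type*} [MeasurableSpace Ω] (ℙ : Measure Ω) [IsProbabilityMeasure ℙ]
    (ρ δ t : ℝ) (hδ : 0 < δ) (hδρ : δ ≤ ρ) (ht : 0 ≤ t)
    (Y G : Ω → ℕ) (hYmeas : Measurable Y) (hGmeas : Measurable G)
    (hYpos : ∀ ω, 1 ≤ Y ω) (hGpos : ∀ ω, 1 ≤ G ω)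
    (hY : ∀ k : ℕ, 1 ≤ k →
      ℙ {ω | Y ω = k} = ENNReal.ofReal ((1 - exp (-ρ * t)) ^ (k - 1) * exp (-ρ * t)))
    (hG : ∀ k : ℕ, 1 ≤ k →
      ℙ {ω | G ω = k} = ENNReal.ofReal ((δ / ρ) * (1 - δ / ρ) ^ (k - 1)))
    (hindep : ProbabilityTheory.IndepFun Y G ℙ) :
    ∫⁻ ω, (if Y ω ≤ G ω then (Y ω : ℝ≥0∞) else 0) ∂ℙ
      = ENNReal.ofReal (exp (ρ * t) / (1 + δ * (exp (ρ * t) - 1) / ρ) ^ 2) :=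
  expected_cluster_size_general ℙ ρ δ t hδ hδρ ht Y G hYmeas hGmeas hY hG hindep
end

section
/- Define L(x) = (1-p)γ ∫_0^∞ e^{(ρ-x)t} / (1 + δ(e^{ρt}-1)/ρ)^2 dt for x > 0, where γ > 0, p ∈ (0,1), 0 < δ < (1-p)γ and ρ = δ + pγ. Then L is continuous and strictly decreasing on (0,∞), lim_{x→0+} L(x) = (1-p)γ/δ > 1, lim_{x→∞} L(x) = 0, and hence there exists a unique α ∈ (0,∞) with L(α) = 1. -/
/-!
The integrand factors as `e^{-xt} k(t)` with `k(t) = e^{ρt} / g(t)^2` and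
`g(t) = 1 + δ(e^{ρt} - 1)/ρ`, so `L` is `(1-p)γ` times the Laplace transform of `k`.
Since `g' = δ e^{ρt}`, `k` is the derivative of `-(δ g)⁻¹`, which increases from `-1/δ` to `0`;
hence `k` is integrable with `∫_0^∞ k = 1/δ`. The Laplace transform of a positive integrable
function is continuous on `[0, ∞)` and tends to `0` at `∞` by dominated convergence (dominated
by `|k|`), and it is strictly decreasing. As `(1-p)γ/δ > 1`, the intermediate value theorem
gives the unique root.
-/

open MeasureTheory Real Filter Topology Set

noncomputable def laplaceTransform (k : ℝ → ℝ) (x : ℝ) : ℝ :=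
  ∫ t in Ioi 0, exp (-(x * t)) * k t

lemma setIntegral_pos_of_forall_pos {α : Type*} [MeasurableSpace α] {μ : Measure α} {s : Set α}
    {f : α → ℝ} (hs : MeasurableSet s) (hμs : μ s ≠ 0) (hf : IntegrableOn f s μ)
    (hpos : ∀ x ∈ s, 0 < f x) : 0 < ∫ x in s, f x ∂μ := by
  have hsupp : Function.support f ∩ s = s := inter_eq_right.2 fun x hx => (hpos x hx).ne'
  rw [setIntegral_pos_iff_support_of_nonneg_ae
    ((ae_restrict_iff' hs).2 (ae_of_all _ fun x hx => (hpos x hx).le)) hf, hsupp]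
  exact pos_iff_ne_zero.2 hμs

lemma existsUnique_eq_of_strictAntiOn_Ioi {f : ℝ → ℝ} {l a b c : ℝ}
    (hcont : ContinuousOn f (Ioi l)) (hanti : StrictAntiOn f (Ioi l))
    (hl : Tendsto f (𝓝[>] l) (𝓝 a)) (htop : Tendsto f atTop (𝓝 b)) (hbc : b < c) (hca : c < a) :
    ∃! x, l < x ∧ f x = c := by
  obtain ⟨u, hu, hlu⟩ := ((hl.eventually (eventually_gt_nhds hca)).and self_mem_nhdsWithin).exists
  obtain ⟨v, hv, huv⟩ :=
    ((htop.eventually (eventually_lt_nhds hbc)).and (eventually_gt_atTop u)).exists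
  obtain ⟨x, hx, hfx⟩ := intermediate_value_Icc' huv.le
    (hcont.mono fun t ht => lt_of_lt_of_le hlu ht.1) ⟨hv.le, hu.le⟩
  have hlx : l < x := lt_of_lt_of_le hlu hx.1
  exact ⟨x, ⟨hlx, hfx⟩, fun y ⟨hly, hfy⟩ => hanti.injOn hly hlx (hfy.trans hfx.symm)⟩

section LaplaceTransform

variable {k : ℝ → ℝ}

lemma laplaceTransform_zero : laplaceTransform k 0 = ∫ t in Ioi 0, k t := by
  simp [laplaceTransform]

lemma ae_norm_exp_neg_mul_mul_le {x : ℝ} (hx : 0 ≤ x) :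
    ∀ᵐ t ∂volume.restrict (Ioi 0), ‖exp (-(x * t)) * k t‖ ≤ ‖k t‖ := by
  refine (ae_restrict_iff' measurableSet_Ioi).2 (ae_of_all _ fun t (ht : 0 < t) => ?_)
  rw [norm_mul, norm_of_nonneg (exp_pos _).le]
  exact mul_le_of_le_one_left (norm_nonneg _)
    (exp_le_one_iff.2 (neg_nonpos.2 (mul_nonneg hx ht.le)))

variable (hk : IntegrableOn k (Ioi 0))
include hk

lemma integrableOn_exp_neg_mul_mul {x : ℝ} (hx : 0 ≤ x) :
    IntegrableOn (fun t => exp (-(x * t)) * k t) (Ioi 0) :=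
  hk.norm.mono' ((by fun_prop : Continuous fun t => exp (-(x * t))).aestronglyMeasurable.mul
    hk.aestronglyMeasurable) (ae_norm_exp_neg_mul_mul_le hx)

lemma continuousOn_laplaceTransform : ContinuousOn (laplaceTransform k) (Ici 0) :=
  continuousOn_of_dominated (fun _ hx => (integrableOn_exp_neg_mul_mul hk hx).aestronglyMeasurable)
    (fun _ hx => ae_norm_exp_neg_mul_mul_le hx) hk.norm
    (ae_of_all _ fun _ => by fun_prop)

lemma tendsto_laplaceTransform_atTop : Tendsto (laplaceTransform k) atTop (𝓝 0) := by
  have hlim : ∀ᵐ t ∂volume.restrict (Ioi 0),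
      Tendsto (fun x => exp (-(x * t)) * k t) atTop (𝓝 0) := by
    refine (ae_restrict_iff' measurableSet_Ioi).2 (ae_of_all _ fun t (ht : 0 < t) => ?_)
    simpa using ((tendsto_exp_atBot.comp
      (tendsto_neg_atTop_atBot.comp (tendsto_id.atTop_mul_const ht))).mul_const (k t))
  have h := tendsto_integral_filter_of_dominated_convergence (fun t => ‖k t‖)
    ((eventually_ge_atTop 0).mono fun _ hx =>
      (integrableOn_exp_neg_mul_mul hk hx).aestronglyMeasurable)
    ((eventually_ge_atTop 0).mono fun _ hx => ae_norm_exp_neg_mul_mul_le hx) hk.norm hlim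
  rwa [integral_zero] at h

lemma strictAntiOn_laplaceTransform (hpos : ∀ t ∈ Ioi 0, 0 < k t) :
    StrictAntiOn (laplaceTransform k) (Ici 0) := by
  intro x (hx : 0 ≤ x) y (hy : 0 ≤ y) hxy
  rw [← sub_pos, laplaceTransform, laplaceTransform,
    ← integral_sub (integrableOn_exp_neg_mul_mul hk hx) (integrableOn_exp_neg_mul_mul hk hy)]
  refine setIntegral_pos_of_forall_pos measurableSet_Ioi (by simp)
    ((integrableOn_exp_neg_mul_mul hk hx).sub (integrableOn_exp_neg_mul_mul hk hy))
    fun t (ht : 0 < t) => ?_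
  rw [← sub_mul]
  exact mul_pos (sub_pos.2 (exp_lt_exp.2 (by nlinarith))) (hpos t ht)

end LaplaceTransform

namespace Malthusian

variable {δ ρ : ℝ}

noncomputable def denom (δ ρ t : ℝ) : ℝ := 1 + δ * (exp (ρ * t) - 1) / ρ

noncomputable def kernel (δ ρ t : ℝ) : ℝ := exp (ρ * t) / denom δ ρ t ^ 2

lemma one_le_denom (hδ : 0 ≤ δ) (hρ : 0 ≤ ρ) {t : ℝ} (ht : 0 ≤ t) : 1 ≤ denom δ ρ t := by
  have hexp : 0 ≤ exp (ρ * t) - 1 := sub_nonneg.2 (one_le_exp (mul_nonneg hρ ht))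
  exact le_add_of_nonneg_right (by positivity)

lemma kernel_pos (hδ : 0 ≤ δ) (hρ : 0 ≤ ρ) {t : ℝ} (ht : 0 ≤ t) : 0 < kernel δ ρ t :=
  div_pos (exp_pos _) (pow_pos (zero_lt_one.trans_le (one_le_denom hδ hρ ht)) 2)

lemma hasDerivAt_denom (hρ : ρ ≠ 0) (t : ℝ) : HasDerivAt (denom δ ρ) (δ * exp (ρ * t)) t := by
  have h : HasDerivAt (denom δ ρ) (δ * (exp (ρ * t) * (ρ * 1)) / ρ) t :=
    ((((hasDerivAt_id t).const_mul ρ).exp.sub_const 1).const_mul δ).div_const ρ |>.const_add 1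
  convert h using 1
  field_simp

lemma tendsto_denom_atTop (hδ : 0 < δ) (hρ : 0 < ρ) : Tendsto (denom δ ρ) atTop atTop := by
  have hexp : Tendsto (fun t => exp (ρ * t)) atTop atTop :=
    tendsto_exp_atTop.comp (tendsto_id.const_mul_atTop hρ)
  exact tendsto_atTop_add_const_left _ 1
    ((tendsto_atTop_add_const_right _ (-1) hexp).const_mul_atTop hδ |>.atTop_div_const hρ)

lemma hasDerivAt_neg_inv_mul_denom (hδ : 0 < δ) (hρ : 0 < ρ) {t : ℝ} (ht : 0 ≤ t) :
    HasDerivAt (fun s => -(δ * denom δ ρ s)⁻¹) (kernel δ ρ t) t := by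
  have hdenom : denom δ ρ t ≠ 0 := (zero_lt_one.trans_le (one_le_denom hδ.le hρ.le ht)).ne'
  refine (((hasDerivAt_denom hρ.ne' t).const_mul δ).inv (mul_ne_zero hδ.ne' hdenom)).neg
    |>.congr_deriv ?_
  rw [kernel]
  field_simp

lemma tendsto_neg_inv_mul_denom_atTop (hδ : 0 < δ) (hρ : 0 < ρ) :
    Tendsto (fun s => -(δ * denom δ ρ s)⁻¹) atTop (𝓝 0) := by
  simpa using ((tendsto_denom_atTop hδ hρ).const_mul_atTop hδ).inv_tendsto_atTop.neg

lemma integrableOn_kernel (hδ : 0 < δ) (hρ : 0 < ρ) : IntegrableOn (kernel δ ρ) (Ioi 0) :=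
  integrableOn_Ioi_deriv_of_nonneg' (fun _ ht => hasDerivAt_neg_inv_mul_denom hδ hρ ht)
    (fun _ ht => (kernel_pos hδ.le hρ.le (le_of_lt ht)).le)
    (tendsto_neg_inv_mul_denom_atTop hδ hρ)

lemma integral_kernel (hδ : 0 < δ) (hρ : 0 < ρ) : ∫ t in Ioi 0, kernel δ ρ t = 1 / δ := by
  rw [integral_Ioi_of_hasDerivAt_of_nonneg' (fun _ ht => hasDerivAt_neg_inv_mul_denom hδ hρ ht)
    (fun _ ht => (kernel_pos hδ.le hρ.le (le_of_lt ht)).le) (tendsto_neg_inv_mul_denom_atTop hδ hρ)]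
  simp [denom]

lemma laplaceTransform_kernel (x : ℝ) :
    laplaceTransform (kernel δ ρ) x =
      ∫ t in Ioi 0, exp ((ρ - x) * t) / (1 + δ * (exp (ρ * t) - 1) / ρ) ^ 2 := by
  refine integral_congr_ae (ae_of_all _ fun t => ?_)
  simp only [kernel, denom, ← mul_div_assoc, ← exp_add]
  ring_nf

end Malthusian

/-- Existence and uniqueness of the Malthusian parameter: the Laplace transform
`L(x) = (1-p)γ ∫_0^∞ e^{(ρ-x)t}/(1+δ(e^{ρt}-1)/ρ)^2 dt` is continuous and
strictly decreasing on `(0,∞)`, tends to `(1-p)γ/δ > 1` at `0+` and to `0` at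
`∞`, and has a unique root `α` of `L(α) = 1`. -/
theorem malthusian_parameter_exists_unique
    (γ p δ ρ : ℝ) (hγ : 0 < γ) (hp : p ∈ Set.Ioo (0:ℝ) 1) (hδ : 0 < δ)
    (hsup : δ < (1 - p) * γ) (hρ : ρ = δ + p * γ)
    (L : ℝ → ℝ)
    (hL : ∀ x, 0 < x → L x =
      (1 - p) * γ * ∫ t in Set.Ioi (0:ℝ), exp ((ρ - x) * t) / (1 + δ * (exp (ρ * t) - 1) / ρ) ^ 2) :
    ContinuousOn L (Set.Ioi 0) ∧
    StrictAntiOn L (Set.Ioi 0) ∧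
    Tendsto L (nhdsWithin 0 (Set.Ioi 0)) (nhds ((1 - p) * γ / δ)) ∧
    1 < (1 - p) * γ / δ ∧
    Tendsto L atTop (nhds 0) ∧
    ∃! α : ℝ, 0 < α ∧ L α = 1 := by
  obtain ⟨hp0, hp1⟩ := hp
  have hρ0 : 0 < ρ := by rw [hρ]; positivity
  have hc : 0 < (1 - p) * γ := mul_pos (sub_pos.2 hp1) hγ
  have hk := Malthusian.integrableOn_kernel hδ hρ0
  have hkpos : ∀ t ∈ Ioi 0, 0 < Malthusian.kernel δ ρ t :=
    fun _ ht => Malthusian.kernel_pos hδ.le hρ0.le (le_of_lt ht)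
  have hLk : EqOn L (fun x => (1 - p) * γ * laplaceTransform (Malthusian.kernel δ ρ) x) (Ioi 0) :=
    fun x hx => by simp only [hL x hx, Malthusian.laplaceTransform_kernel]
  have hcont : ContinuousOn L (Ioi 0) :=
    (continuousOn_const.mul ((continuousOn_laplaceTransform hk).mono Ioi_subset_Ici_self)).congr hLk
  have hanti : StrictAntiOn L (Ioi 0) := fun x hx y hy hxy => by
    rw [hLk hx, hLk hy]
    exact mul_lt_mul_of_pos_left (strictAntiOn_laplaceTransform hk hkpos
      (Ioi_subset_Ici_self hx) (Ioi_subset_Ici_self hy) hxy) hc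
  have hzero : Tendsto L (𝓝[>] 0) (𝓝 ((1 - p) * γ / δ)) := by
    have h := ((continuousOn_laplaceTransform hk 0 self_mem_Ici).mono
      Ioi_subset_Ici_self).tendsto.const_mul ((1 - p) * γ)
    rw [laplaceTransform_zero, Malthusian.integral_kernel hδ hρ0, ← div_eq_mul_one_div] at h
    exact h.congr' (eventuallyEq_nhdsWithin_of_eqOn hLk).symm
  have htop : Tendsto L atTop (𝓝 0) := by
    have h := (tendsto_laplaceTransform_atTop hk).const_mul ((1 - p) * γ)
    rw [mul_zero] at h
    exact h.congr' ((eventually_gt_atTop 0).mono fun x hx => (hLk hx).symm)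
  have hgt : 1 < (1 - p) * γ / δ := (one_lt_div hδ).2 hsup
  exact ⟨hcont, hanti, hzero, hgt, htop,
    existsUnique_eq_of_strictAntiOn_Ioi hcont hanti hzero htop zero_lt_one hgt⟩
end
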